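/- Let τ be the Laplacian of H² × ℝ, acting on smooth functions of (z,t) ∈ H² × ℝ by τ(F) = 4(1−zz̄)² ∂²F/∂z∂z̄ + ∂²F/∂t². If f, g : H² → ℂ are holomorphic and p(t) = b₀ + b₁t + b₂t² + b₃t³ with (b₂,b₃) ≠ 0, then F(z,t) = (f(z) + g(z̄))·p(t) satisfies τ²(F) = 0 and τ(F)(z,t) = (f(z)+g(z̄))·(2b₂ + 6b₃t); in particular F is proper biharmonic whenever f + g∘conj is not identically zero. -/

import Mathlib

noncomputable section

/-- Second partial derivative in the real direction, for functions on `ℂ`. -/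
def dxx (f : ℂ → ℂ) (z : ℂ) : ℂ := fderiv ℝ (fun w => fderiv ℝ f w 1) z 1
/-- Second partial derivative in the imaginary direction, for functions on `ℂ`. -/
def dyy (f : ℂ → ℂ) (z : ℂ) : ℂ :=
  fderiv ℝ (fun w => fderiv ℝ f w Complex.I) z Complex.I

/-- The Laplace-Beltrami operator of `H² × ℝ`:
`τ(F)(z,t) = 4(1-zz̄)² ∂²F/∂z∂z̄ + ∂²F/∂t²
           = (1-|z|²)²(F_xx + F_yy) + F_tt`. -/
def h2rTau (F : ℂ → ℝ → ℂ) (z : ℂ) (t : ℝ) : ℂ :=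
  (((1 - ‖z‖ ^ 2) ^ 2 : ℝ) : ℂ) * (dxx (fun w => F w t) z + dyy (fun w => F w t) z)
    + deriv (fun s => deriv (fun s' => F z s') s) t

/-!
Holomorphic and antiholomorphic functions are harmonic, so for `h(z) = f(z) + g(z̄)` and any
`p : ℝ → ℂ` the hyperbolic factor `(1 - |z|²)²` of `τ(h·p)` multiplies zero and `τ(h·p) = h·p''`.
For the cubic `p` this gives `τF = h·(2b₂ + 6b₃t)`, which is again of the form `h·q`, so
`τ²F = h·q'' = 0`; and `τF` vanishes identically only if `h ≡ 0` or `2b₂ + 6b₃t ≡ 0`.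
-/

open Complex ComplexConjugate Filter Topology InnerProductSpace Laplacian

theorem ContDiffAt.dxx_add_dyy_eq_laplacian {F : ℂ → ℂ} {z : ℂ} (h : ContDiffAt ℝ 2 F z) :
    dxx F z + dyy F z = Δ F z := by
  have hF' : DifferentiableAt ℝ (fderiv ℝ F) z :=
    (h.fderiv_right (m := 1) (by norm_num)).differentiableAt one_ne_zero
  simp [dxx, dyy, laplacian_eq_iteratedFDeriv_complexPlane, iteratedFDeriv_two_apply,
    fderiv_clm_apply hF']

theorem InnerProductSpace.HarmonicAt.dxx_add_dyy_eq_zero {F : ℂ → ℂ} {z : ℂ}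
    (h : HarmonicAt F z) : dxx F z + dyy F z = 0 :=
  h.1.dxx_add_dyy_eq_laplacian.trans h.2.self_of_nhds

theorem AnalyticAt.conj_conj {f : ℂ → ℂ} {x : ℂ} (hf : AnalyticAt ℂ f x) :
    AnalyticAt ℂ (conj ∘ f ∘ conj) (conj x) := by
  rw [Complex.analyticAt_iff_eventually_differentiableAt] at hf ⊢
  have hconj : Tendsto conj (𝓝 (conj x)) (𝓝 x) := by
    simpa using continuous_conj.tendsto (conj x)
  filter_upwards [hconj.eventually hf] with w hw
  simpa using hw.conj_conj

/-- `g ∘ conj` is the complex conjugate of the holomorphic function `conj ∘ g ∘ conj`. -/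
theorem AnalyticAt.harmonicAt_comp_conj {g : ℂ → ℂ} {z : ℂ} (hg : AnalyticAt ℂ g (conj z)) :
    HarmonicAt (fun w => g (conj w)) z := by
  have h := hg.conj_conj.harmonicAt_conj
  simp only [RCLike.conj_conj] at h
  convert h using 1
  funext w
  simp

theorem Filter.EventuallyEq.h2rTau_eq {F G : ℂ → ℝ → ℂ} {z : ℂ} (h : F =ᶠ[𝓝 z] G) (t : ℝ) :
    h2rTau F z t = h2rTau G z t := by
  have hx : (fun w => F w t) =ᶠ[𝓝 z] fun w => G w t := h.mono fun w hw => congrFun hw t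
  have hdx (v : ℂ) : (fun w => fderiv ℝ (fun w => F w t) w v) =ᶠ[𝓝 z]
      fun w => fderiv ℝ (fun w => G w t) w v :=
    (hx.fderiv (𝕜 := ℝ)).mono fun w hw => by simp only [hw]
  simp only [h2rTau, dxx, dyy, (hdx 1).fderiv_eq, (hdx I).fderiv_eq, h.self_of_nhds]

theorem h2rTau_add_comp_conj_mul {f g : ℂ → ℂ} {z : ℂ} (hf : AnalyticAt ℂ f z)
    (hg : AnalyticAt ℂ g (conj z)) (p : ℝ → ℂ) (t : ℝ) :
    h2rTau (fun w s => (f w + g (conj w)) * p s) z t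
      = (f z + g (conj z)) * deriv (deriv p) t := by
  have hsplit : (fun w => (f w + g (conj w)) * p t)
      = (fun w => f w * p t) + fun w => g (conj w) * p t := by
    funext w
    simp [add_mul]
  have hharmonic := ((hf.fun_mul (analyticAt_const (v := p t))).harmonicAt.add
    (hg.fun_mul (analyticAt_const (v := p t))).harmonicAt_comp_conj).dxx_add_dyy_eq_zero
  simp [h2rTau, hsplit, hharmonic, deriv_const_mul_field]

def cubic (b₀ b₁ b₂ b₃ : ℂ) (t : ℝ) : ℂ := b₀ + b₁ * t + b₂ * t ^ 2 + b₃ * t ^ 3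

theorem deriv_cubic (b₀ b₁ b₂ b₃ : ℂ) :
    deriv (cubic b₀ b₁ b₂ b₃) = cubic b₁ (2 * b₂) (3 * b₃) 0 := by
  funext t
  have h : HasDerivAt (fun w : ℂ => b₀ + b₁ * w + b₂ * w ^ 2 + b₃ * w ^ 3)
      (b₁ + 2 * b₂ * t + 3 * b₃ * t ^ 2) (t : ℂ) :=
    ((((hasDerivAt_const (t : ℂ) b₀).add ((hasDerivAt_id (t : ℂ)).const_mul b₁)).add
      ((hasDerivAt_pow 2 (t : ℂ)).const_mul b₂)).add
      ((hasDerivAt_pow 3 (t : ℂ)).const_mul b₃)).congr_deriv (by push_cast; ring)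
  exact h.comp_ofReal.deriv.trans (by simp [cubic])

theorem h2rTau_add_comp_conj_mul_cubic {f g : ℂ → ℂ} {z : ℂ} (hf : AnalyticAt ℂ f z)
    (hg : AnalyticAt ℂ g (conj z)) (b₀ b₁ b₂ b₃ : ℂ) (t : ℝ) :
    h2rTau (fun w s => (f w + g (conj w)) * cubic b₀ b₁ b₂ b₃ s) z t
      = (f z + g (conj z)) * cubic (2 * b₂) (6 * b₃) 0 0 t := by
  rw [h2rTau_add_comp_conj_mul hf hg, deriv_cubic, deriv_cubic]
  simp only [cubic]
  ring

theorem eq_zero_of_forall_cubic_eq_zero {a b : ℂ} (h : ∀ t, cubic a b 0 0 t = 0) :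
    a = 0 ∧ b = 0 := by
  have h₀ := h 0
  have h₁ := h 1
  simp only [cubic] at h₀ h₁
  constructor <;> simp_all

theorem h2_times_r_proper_biharmonic (f g : ℂ → ℂ)
    (hf : DifferentiableOn ℂ f {z : ℂ | ‖z‖ < 1})
    (hg : DifferentiableOn ℂ g {z : ℂ | ‖z‖ < 1})
    (b₀ b₁ b₂ b₃ : ℂ) (hb : (b₂, b₃) ≠ (0, 0))
    (F : ℂ → ℝ → ℂ)
    (hF : F = fun (z : ℂ) (t : ℝ) => (f z + g (starRingEnd ℂ z)) *
      (b₀ + b₁ * (t : ℂ) + b₂ * (t : ℂ) ^ 2 + b₃ * (t : ℂ) ^ 3)) :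
    (∀ z : ℂ, ‖z‖ < 1 → ∀ t : ℝ,
        h2rTau F z t = (f z + g (starRingEnd ℂ z)) * (2 * b₂ + 6 * b₃ * (t : ℂ)))
      ∧ (∀ z : ℂ, ‖z‖ < 1 → ∀ t : ℝ, h2rTau (fun w s => h2rTau F w s) z t = 0)
      ∧ ((¬ ∀ z : ℂ, ‖z‖ < 1 → f z + g (starRingEnd ℂ z) = 0) →
          ¬ ∀ z : ℂ, ‖z‖ < 1 → ∀ t : ℝ, h2rTau F z t = 0) := by
  have hdisc : IsOpen {z : ℂ | ‖z‖ < 1} := isOpen_lt continuous_norm continuous_const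
  have hτ (b₀ b₁ b₂ b₃ : ℂ) {z : ℂ} (hz : ‖z‖ < 1) (t : ℝ) :
      h2rTau (fun w s => (f w + g (conj w)) * cubic b₀ b₁ b₂ b₃ s) z t
        = (f z + g (conj z)) * cubic (2 * b₂) (6 * b₃) 0 0 t :=
    h2rTau_add_comp_conj_mul_cubic (hf.analyticAt (hdisc.mem_nhds hz))
      (hg.analyticAt (hdisc.mem_nhds (by simpa using hz))) b₀ b₁ b₂ b₃ t
  have hτF (z : ℂ) (hz : ‖z‖ < 1) (t : ℝ) :
      h2rTau F z t = (f z + g (conj z)) * cubic (2 * b₂) (6 * b₃) 0 0 t := by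
    subst hF
    exact hτ b₀ b₁ b₂ b₃ hz t
  refine ⟨fun z hz t => by simp [hτF z hz t, cubic], fun z hz t => ?_,
    fun hne hzero => hne fun z hz => ?_⟩
  · have hlocal : (fun w s => h2rTau F w s) =ᶠ[𝓝 z]
        fun w s => (f w + g (conj w)) * cubic (2 * b₂) (6 * b₃) 0 0 s := by
      filter_upwards [hdisc.mem_nhds hz] with w hw
      funext s
      exact hτF w hw s
    rw [hlocal.h2rTau_eq, hτ _ _ _ _ hz]
    simp [cubic]
  · by_contra hz0
    have hlinear (t : ℝ) : cubic (2 * b₂) (6 * b₃) 0 0 t = 0 :=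
      (mul_eq_zero.mp ((hτF z hz t).symm.trans (hzero z hz t))).resolve_left hz0
    exact hb (by simpa using eq_zero_of_forall_cubic_eq_zero hlinear)
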